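/- Let E be an elliptic curve over a complete discretely valued field K of characteristic 0 with supersingular reduction, e = v_K(p). Let a(Ê) be the coefficient of T^p in the multiplication-by-p series [p](T) of the formal group Ê. If v_K(a(Ê)) ≥ pe/(p+1), then every nonzero p-torsion point x ∈ Ê[p] of the formal group satisfies v_K(x) = e/(p²−1). -/

import Mathlib

/-- Data of a normalized discrete (additive) valuation on a field `K`:
`v : K → ℤ ∪ {∞}` with `v(x) = ∞ ↔ x = 0`, multiplicative, ultrametric and surjective
(so `K` is a discrete valuation field, `O_K = {v ≥ 0}`, `m_K = {v > 0}`). -/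
structure DVF (K : Type) [Field K] where
  v : K → WithTop ℤ
  v_top_iff : ∀ x : K, v x = ⊤ ↔ x = 0
  v_mul : ∀ x y : K, v (x * y) = v x + v y
  v_add : ∀ x y : K, min (v x) (v y) ≤ v (x + y)
  v_surj : ∀ n : ℤ, ∃ x : K, v x = (n : WithTop ℤ)

namespace DVF

variable {K : Type} [Field K] (V : DVF K)

/-- The sequence `s` converges to `L` in the valuation topology of `V`. -/
def Tendsto (s : ℕ → K) (L : K) : Prop :=
  ∀ N : ℤ, ∃ M : ℕ, ∀ m : ℕ, M ≤ m → (N : WithTop ℤ) ≤ V.v (s m - L)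

/-- `K` is complete with respect to the valuation `V`: every Cauchy sequence converges. -/
def IsComplete : Prop :=
  ∀ s : ℕ → K,
    (∀ N : ℤ, ∃ M : ℕ, ∀ m k : ℕ, M ≤ m → M ≤ k → (N : WithTop ℤ) ≤ V.v (s m - s k)) →
    ∃ L : K, V.Tendsto s L

/-- The residue field `O_K/m_K` (of characteristic `p`) is perfect:
every residue class is a `p`-th power. -/
def ResiduePerfect (p : ℕ) : Prop :=
  ∀ x : K, 0 ≤ V.v x → ∃ y : K, 0 ≤ V.v y ∧ 0 < V.v (x - y ^ p)

/-- The residue field `O_K/m_K` is finite. -/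
def ResidueFinite : Prop :=
  ∃ S : Finset K, ∀ x : K, 0 ≤ V.v x → ∃ y ∈ S, 0 < V.v (x - y)

/-- `K` is Henselian: simple roots of integral polynomials lift from the residue field. -/
def IsHenselian : Prop :=
  ∀ f : Polynomial K, (∀ i : ℕ, 0 ≤ V.v (f.coeff i)) →
    ∀ a : K, 0 ≤ V.v a → 0 < V.v (f.eval a) → V.v (f.derivative.eval a) = 0 →
      ∃ b : K, f.eval b = 0 ∧ 0 < V.v (b - a)

end DVF

/-- `y` is the value of the one-variable power series `φ` at `x` (limit of partial sums). -/
def PSEval {K : Type} [Field K] (V : DVF K) (φ : PowerSeries K) (x y : K) : Prop :=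
  V.Tendsto (fun n => ∑ i ∈ Finset.range n, PowerSeries.coeff (R := K) i φ * x ^ i) y

/-- `z` is the value of the two-variable power series `F` at `(x, y)`. -/
def FEval {K : Type} [Field K] (V : DVF K) (F : MvPowerSeries (Fin 2) K) (x y z : K) : Prop :=
  V.Tendsto (fun n => ∑ i ∈ Finset.range n, ∑ j ∈ Finset.range n,
    MvPowerSeries.coeff (R := K) (Finsupp.single 0 i + Finsupp.single 1 j) F * x ^ i * y ^ j) z

/-- A one-dimensional commutative formal group law `F(X,Y)` over the valuation ring `O_K`
(integral coefficients, `F ≡ X + Y` mod degree 2, commutative and associative;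
associativity `F(F(X,Y),Z) = F(X,F(Y,Z))` is written out coefficientwise). -/
structure FGL (K : Type) [Field K] (V : DVF K) where
  F : MvPowerSeries (Fin 2) K
  int_coeff : ∀ d : Fin 2 →₀ ℕ, 0 ≤ V.v (MvPowerSeries.coeff (R := K) d F)
  const : MvPowerSeries.coeff (R := K) 0 F = 0
  linX : MvPowerSeries.coeff (R := K) (Finsupp.single 0 1) F = 1
  linY : MvPowerSeries.coeff (R := K) (Finsupp.single 1 1) F = 1
  comm : ∀ d : Fin 2 →₀ ℕ,
    MvPowerSeries.coeff (R := K) d F = MvPowerSeries.coeff (R := K) (Finsupp.equivMapDomain (Equiv.swap 0 1) d) F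
  assoc : ∀ i j l : ℕ,
    (∑ k ∈ Finset.range (i + j + 1),
      MvPowerSeries.coeff (R := K) (Finsupp.single 0 k + Finsupp.single 1 l) F *
        MvPowerSeries.coeff (R := K) (Finsupp.single 0 i + Finsupp.single 1 j) (F ^ k)) =
    (∑ k ∈ Finset.range (j + l + 1),
      MvPowerSeries.coeff (R := K) (Finsupp.single 0 i + Finsupp.single 1 k) F *
        MvPowerSeries.coeff (R := K) (Finsupp.single 0 j + Finsupp.single 1 l) (F ^ k))

/-- An isogeny `φ : F → G` of formal groups over `O_K`: a nonzero integral power series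
with `φ(0) = 0` and `φ(F(X,Y)) = G(φ(X),φ(Y))` (written out coefficientwise). -/
structure Isog {K : Type} [Field K] (V : DVF K) (Fg Gg : FGL K V) where
  φ : PowerSeries K
  ne_zero : φ ≠ 0
  int_coeff : ∀ i : ℕ, 0 ≤ V.v (PowerSeries.coeff (R := K) i φ)
  const : PowerSeries.coeff (R := K) 0 φ = 0
  hom : ∀ i j : ℕ,
    (∑ k ∈ Finset.range (i + j + 1),
      PowerSeries.coeff (R := K) k φ *
        MvPowerSeries.coeff (R := K) (Finsupp.single 0 i + Finsupp.single 1 j) (Fg.F ^ k)) =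
    (∑ k ∈ Finset.range (i + j + 1), ∑ l ∈ Finset.range (i + j + 1),
      MvPowerSeries.coeff (R := K) (Finsupp.single 0 k + Finsupp.single 1 l) Gg.F *
        PowerSeries.coeff (R := K) i (φ ^ k) * PowerSeries.coeff (R := K) j (φ ^ l))

/-- The power series `φ` has height `n`: `φ(T) ≡ ψ(T^{p^n}) (mod m_K)`
for some integral `ψ` with `v(ψ'(0)) = 0`. -/
def HasHeight {K : Type} [Field K] (V : DVF K) (p n : ℕ) (φ : PowerSeries K) : Prop :=
  ∃ ψ : PowerSeries K, (∀ i : ℕ, 0 ≤ V.v (PowerSeries.coeff (R := K) i ψ)) ∧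
    V.v (PowerSeries.coeff (R := K) 1 ψ) = 0 ∧
    ∀ j : ℕ, 0 < V.v (PowerSeries.coeff (R := K) j φ -
      (if p ^ n ∣ j then PowerSeries.coeff (R := K) (j / p ^ n) ψ else 0))

/-- Evaluation of a one-variable power series over `K` at a point of a valued extension
field `L` (coefficients transported along `ι`). -/
def PSEvalExt {K L : Type} [Field K] [Field L] (W : DVF L) (ι : K →+* L)
    (φ : PowerSeries K) (x y : L) : Prop :=
  W.Tendsto (fun n => ∑ i ∈ Finset.range n, ι (PowerSeries.coeff (R := K) i φ) * x ^ i) y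

/-- Evaluation of a two-variable power series over `K` at points of a valued extension
field `L`. -/
def FEvalExt {K L : Type} [Field K] [Field L] (W : DVF L) (ι : K →+* L)
    (F : MvPowerSeries (Fin 2) K) (x y z : L) : Prop :=
  W.Tendsto (fun n => ∑ i ∈ Finset.range n, ∑ j ∈ Finset.range n,
    ι (MvPowerSeries.coeff (R := K) (Finsupp.single 0 i + Finsupp.single 1 j) F) * x ^ i * y ^ j) z

/-!
The coefficients `c_j` of `[p](T)` satisfy `v(c_1) = e`, `v(c_j) ≥ e` for `p ∤ j` (compare the
coefficients of `X Y^{j-1}` in `[p](F(X,Y)) = F([p]X, [p]Y)`), `v(c_{kp}) ≥ min(e, v(c_p))` for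
`k < p` (compare the coefficients of `X^p Y^{(k-1)p}` modulo `p`, where `F^{kp} = (F^k)^p` only
involves `X^p` and `Y^p`), and `v(c_{p²}) = 0` (height 2). Together with `v(c_p) ≥ pe/(p+1)` this
says that the Newton polygon of `[p]` on `[1, p²]` is the single segment from `(1, e)` to `(p², 0)`,
so a root `x` of positive valuation has `v(x) = e/(p²-1)`: for any other value of `v(x)` one term
of `∑ c_j x^j` has strictly smaller valuation than all the others.
-/

open Finset

lemma WithTop.nsmul_coe_int (n : ℕ) (u : ℤ) : n • (u : WithTop ℤ) = ((n * u : ℤ) : WithTop ℤ) := by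
  rw [← WithTop.coe_nsmul, nsmul_eq_mul]

namespace DVF

variable {K : Type} [Field K] (V : DVF K)

lemma v_zero : V.v 0 = ⊤ := (V.v_top_iff 0).2 rfl

lemma v_one : V.v 1 = 0 := by
  have hne : V.v 1 ≠ ⊤ := fun h => one_ne_zero ((V.v_top_iff 1).1 h)
  obtain ⟨a, ha⟩ := WithTop.ne_top_iff_exists.mp hne
  have h := V.v_mul 1 1
  rw [mul_one, ← ha, ← WithTop.coe_add, WithTop.coe_inj] at h
  rw [← ha, WithTop.coe_eq_zero]
  omega

def toAddValuation : AddValuation K (WithTop ℤ) :=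
  AddValuation.of V.v V.v_zero V.v_one V.v_add V.v_mul

@[simp] lemma toAddValuation_apply (x : K) : V.toAddValuation x = V.v x := rfl

lemma v_pow (x : K) (n : ℕ) : V.v (x ^ n) = n • V.v x := V.toAddValuation.map_pow x n

def integers : Subring K := Valuation.integer V.toAddValuation

lemma mem_integers {x : K} : x ∈ V.integers ↔ 0 ≤ V.v x := Iff.rfl

lemma v_natCast_nonneg (n : ℕ) : 0 ≤ V.v (n : K) := natCast_mem V.integers n

lemma v_coeff_pow_nonneg {σ : Type*} {G : MvPowerSeries σ K}
    (hG : ∀ d, 0 ≤ V.v (MvPowerSeries.coeff d G)) (k : ℕ) (d : σ →₀ ℕ) :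
    0 ≤ V.v (MvPowerSeries.coeff d (G ^ k)) := by
  rw [← MvPowerSeries.map_toSubring G V.integers hG, ← map_pow, MvPowerSeries.coeff_map]
  exact (MvPowerSeries.coeff d (MvPowerSeries.toSubring G V.integers hG ^ k)).2

lemma v_natCast_eq_zero {p n : ℕ} (hp : p.Prime) (hvp : 0 < V.v (p : K)) (hn : ¬ p ∣ n) :
    V.v (n : K) = 0 := by
  obtain ⟨u, w, huw⟩ := Nat.isCoprime_iff_coprime.mpr ((hp.coprime_iff_not_dvd).mpr hn)
  have hsum : (u : K) * p + w * n = 1 := by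
    simpa using congrArg (Int.cast : ℤ → K) huw
  have hup : 0 < V.v ((u : K) * p) := by
    rw [V.v_mul]
    exact lt_of_lt_of_le hvp (le_add_of_nonneg_left (intCast_mem V.integers u))
  have hwn : V.v ((w : K) * n) ≤ 0 := by
    have h := V.v_add (u * p) (w * n)
    rw [hsum, v_one] at h
    exact (min_le_iff.mp h).resolve_left (not_le.mpr hup)
  refine le_antisymm (le_trans ?_ hwn) (V.v_natCast_nonneg n)
  rw [V.v_mul]
  exact le_add_of_nonneg_left (intCast_mem V.integers w)

lemma natCast_mem_nonunits {p : ℕ} (hvp : 0 < V.v (p : K)) :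
    (p : V.integers) ∈ nonunits V.integers := by
  intro hunit
  obtain ⟨b, hb⟩ := isUnit_iff_exists_inv.mp hunit
  have h := congrArg (V.v ∘ Subtype.val) hb
  simp only [Function.comp_apply, Subring.coe_mul, Subring.coe_natCast, Subring.coe_one, V.v_mul,
    V.v_one] at h
  exact (lt_of_lt_of_le hvp (le_add_of_nonneg_right b.2)).ne' h

lemma not_tendsto_sum_zero_of_lt (f : ℕ → K) {j₀ : ℕ} (hne : f j₀ ≠ 0)
    (hmin : ∀ j ≠ j₀, V.v (f j₀) < V.v (f j)) :
    ¬ V.Tendsto (fun n => ∑ i ∈ range n, f i) 0 := by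
  intro hT
  obtain ⟨A, hA⟩ := WithTop.ne_top_iff_exists.mp (mt (V.v_top_iff _).1 hne)
  obtain ⟨M, hM⟩ := hT (A + 1)
  obtain ⟨n, hMn, hjn⟩ : ∃ n, M ≤ n ∧ j₀ < n := ⟨max M (j₀ + 1), le_max_left _ _, by omega⟩
  have hrest : V.v (f j₀) < V.v (∑ i ∈ (range n).erase j₀, f i) :=
    V.toAddValuation.map_lt_sum (by rw [← hA]; exact WithTop.coe_ne_top)
      fun i hi => hmin i (ne_of_mem_erase hi)
  have hsum : V.v (∑ i ∈ range n, f i) = A := by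
    rw [← add_sum_erase _ f (mem_range.mpr hjn), hA]
    exact V.toAddValuation.map_add_eq_of_lt_left hrest
  have h := hM n hMn
  rw [sub_zero, hsum, WithTop.coe_le_coe] at h
  omega

/-- If the Newton polygon of `∑ a_j T^j` on `[1, N]` is the segment from `(1, E)` to `(N, 0)`,
a root `x` with `v(x) > 0` has `v(x) = E/(N-1)`: otherwise the term `j = N` (if `v(x)` is
smaller) or `j = 1` (if it is larger) has strictly the smallest valuation. -/
lemma nsmul_v_eq_of_tendsto_zero {N : ℕ} (hN : 2 ≤ N) {E : ℤ} {a : ℕ → K} (ha0 : a 0 = 0)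
    (ha1 : V.v (a 1) = E) (haN : V.v (a N) = 0) (hint : ∀ j, 0 ≤ V.v (a j))
    (hseg : ∀ j (u : ℤ), 1 ≤ j → j ≤ N → V.v (a j) = u → ((N : ℤ) - j) * E ≤ ((N : ℤ) - 1) * u)
    {x : K} (hx0 : x ≠ 0) (hx : 0 < V.v x)
    (hroot : V.Tendsto (fun n => ∑ i ∈ range n, a i * x ^ i) 0) :
    (N - 1) • V.v x = E := by
  obtain ⟨t, ht⟩ := WithTop.ne_top_iff_exists.mp (mt (V.v_top_iff x).1 hx0)
  have ht1 : 0 < t := by rw [← ht] at hx; exact_mod_cast hx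
  have hterm : ∀ j, a j ≠ 0 → ∃ u : ℤ, V.v (a j * x ^ j) = ((u + j * t : ℤ) : WithTop ℤ) ∧
      0 ≤ u ∧ (1 ≤ j → j ≤ N → ((N : ℤ) - j) * E ≤ ((N : ℤ) - 1) * u) := fun j hj => by
    obtain ⟨u, hu⟩ := WithTop.ne_top_iff_exists.mp (mt (V.v_top_iff _).1 hj)
    refine ⟨u, ?_, ?_, fun h1 h2 => hseg j u h1 h2 hu.symm⟩
    · rw [V.v_mul, V.v_pow, ← hu, ← ht, WithTop.nsmul_coe_int]; rfl
    · exact_mod_cast hu ▸ hint j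
  have hN' : (2 : ℤ) ≤ N := by exact_mod_cast hN
  rcases lt_trichotomy (((N : ℤ) - 1) * t) E with hlt | heq | hgt
  · refine absurd hroot (V.not_tendsto_sum_zero_of_lt _ (j₀ := N) ?_ fun j hj => ?_)
    · exact mul_ne_zero (fun h => by simp [h, V.v_zero] at haN) (pow_ne_zero _ hx0)
    have hvN : V.v (a N * x ^ N) = ((N * t : ℤ) : WithTop ℤ) := by
      rw [V.v_mul, V.v_pow, haN, ← ht, WithTop.nsmul_coe_int, zero_add]
    rw [hvN]
    by_cases hj0 : a j = 0
    · rw [hj0, zero_mul, V.v_zero]; exact WithTop.coe_lt_top _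
    obtain ⟨u, hu, hu0, hsegj⟩ := hterm j hj0
    have hj1 : 1 ≤ j := Nat.pos_of_ne_zero (by rintro rfl; exact hj0 ha0)
    rw [hu, WithTop.coe_lt_coe]
    rcases lt_or_gt_of_ne hj with hjN | hjN
    · have h := hsegj hj1 hjN.le
      have hjN' : (j : ℤ) < N := by exact_mod_cast hjN
      nlinarith [mul_lt_mul_of_pos_left hlt (sub_pos.mpr hjN')]
    · have hjN' : (N : ℤ) < j := by exact_mod_cast hjN
      nlinarith
  · rw [← ht, WithTop.nsmul_coe_int, Nat.cast_sub (by omega), Nat.cast_one, heq]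
  · refine absurd hroot (V.not_tendsto_sum_zero_of_lt _ (j₀ := 1) ?_ fun j hj => ?_)
    · exact mul_ne_zero (fun h => by simp [h, V.v_zero] at ha1) (pow_ne_zero _ hx0)
    have hv1 : V.v (a 1 * x ^ 1) = ((E + t : ℤ) : WithTop ℤ) := by
      rw [V.v_mul, pow_one, ha1, ← ht]; rfl
    rw [hv1]
    by_cases hj0 : a j = 0
    · rw [hj0, zero_mul, V.v_zero]; exact WithTop.coe_lt_top _
    obtain ⟨u, hu, hu0, hsegj⟩ := hterm j hj0
    have hj2 : 2 ≤ j := by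
      rcases Nat.lt_or_ge j 2 with h | h
      · interval_cases j
        · exact absurd ha0 hj0
        · exact absurd rfl hj
      · exact h
    have hj2' : (2 : ℤ) ≤ j := by exact_mod_cast hj2
    rw [hu, WithTop.coe_lt_coe]
    rcases le_or_gt j N with hjN | hjN
    · have h := hsegj (by omega) hjN
      have hjN' : (j : ℤ) ≤ N := by exact_mod_cast hjN
      nlinarith [mul_lt_mul_of_pos_left hgt (show (0 : ℤ) < j - 1 by omega)]
    · have hjN' : (N : ℤ) < j := by exact_mod_cast hjN
      nlinarith

end DVF

/-- `bideg(a, b)` is the exponent of `X^a Y^b`, where `X` and `Y` are the variables `0` and `1`. -/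
notation "bideg(" a ", " b ")" => Finsupp.single (0 : Fin 2) a + Finsupp.single (1 : Fin 2) b

lemma eq_bideg (d : Fin 2 →₀ ℕ) : d = bideg(d 0, d 1) := by
  ext i; fin_cases i <;> simp

lemma sum_antidiagonal_bideg {M : Type*} [AddCommMonoid M] (a b : ℕ)
    (f : (Fin 2 →₀ ℕ) → (Fin 2 →₀ ℕ) → M) :
    ∑ q ∈ antidiagonal bideg(a, b), f q.1 q.2 =
      ∑ i ∈ antidiagonal a, ∑ j ∈ antidiagonal b, f bideg(i.1, j.1) bideg(i.2, j.2) := by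
  rw [← sum_product']
  refine sum_nbij' (fun q => ((q.1 0, q.2 0), (q.1 1, q.2 1)))
    (fun z => (bideg(z.1.1, z.2.1), bideg(z.1.2, z.2.2))) ?_ ?_ ?_ ?_ ?_
  · intro q hq
    have h := HasAntidiagonal.mem_antidiagonal.mp hq
    rw [mem_product, HasAntidiagonal.mem_antidiagonal, HasAntidiagonal.mem_antidiagonal,
      ← Finsupp.add_apply, ← Finsupp.add_apply, h]
    simp
  · intro z hz
    simp only [mem_product, HasAntidiagonal.mem_antidiagonal] at hz
    rw [HasAntidiagonal.mem_antidiagonal, ← hz.1, ← hz.2]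
    ext i; fin_cases i <;> simp
  · intro q _
    exact Prod.ext (eq_bideg q.1).symm (eq_bideg q.2).symm
  · intro z _
    simp
  · intro q _
    rw [← eq_bideg, ← eq_bideg]

namespace PowerSeries

variable {S : Type*} [CommRing S]

lemma coeff_self_pow_of_constantCoeff_eq_zero {f : PowerSeries S} (h0 : constantCoeff f = 0)
    (n : ℕ) : coeff n (f ^ n) = coeff 1 f ^ n := by
  obtain ⟨g, rfl⟩ := X_dvd_iff.mpr h0
  rw [mul_pow, coeff_X_pow_mul', if_pos le_rfl, Nat.sub_self, coeff_zero_eq_constantCoeff,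
    map_pow, ← zero_add 1, coeff_succ_X_mul, coeff_zero_eq_constantCoeff]

/-- `hcomp` is `f ∘ f = f`, written coefficientwise. -/
lemma eq_X_of_comp_self {f : PowerSeries S} (h0 : constantCoeff f = 0) (h1 : coeff 1 f = 1)
    (hcomp : ∀ n, coeff n f = ∑ k ∈ range (n + 1), coeff k f * coeff n (f ^ k)) :
    f = X := by
  ext n
  induction n using Nat.strong_induction_on with
  | _ n ih =>
  match n with
  | 0 => simpa using h0
  | 1 => simpa using h1
  | n + 2 =>
    have h := hcomp (n + 2)
    rw [sum_range_succ, sum_eq_single 1, coeff_self_pow_of_constantCoeff_eq_zero h0,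
      h1, one_pow, pow_one, mul_one, one_mul, left_eq_add] at h
    · rw [h, coeff_X, if_neg (by omega)]
    · intro k hk hk1
      rcases Nat.eq_zero_or_pos k with rfl | hk0
      · rw [coeff_zero_eq_constantCoeff, h0, zero_mul]
      · rw [ih k (mem_range.mp hk), coeff_X, if_neg hk1, zero_mul]
    · intro h1; simp at h1

end PowerSeries

namespace MvPowerSeries

variable {S : Type*} [CommRing S]

noncomputable def coeffXPow (i : ℕ) (G : MvPowerSeries (Fin 2) S) : PowerSeries S :=
  PowerSeries.mk fun b => coeff bideg(i, b) G

@[simp] lemma coeff_coeffXPow (i b : ℕ) (G : MvPowerSeries (Fin 2) S) :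
    PowerSeries.coeff b (coeffXPow i G) = coeff bideg(i, b) G :=
  PowerSeries.coeff_mk _ _

lemma coeffXPow_map {R : Type*} [CommRing R] (f : R →+* S) (i : ℕ) (G : MvPowerSeries (Fin 2) R) :
    coeffXPow i (map f G) = PowerSeries.map f (coeffXPow i G) := by
  ext b; simp

lemma coeffXPow_mul (i : ℕ) (G H : MvPowerSeries (Fin 2) S) :
    coeffXPow i (G * H) = ∑ q ∈ antidiagonal i, coeffXPow q.1 G * coeffXPow q.2 H := by
  ext b
  simp only [coeff_coeffXPow, coeff_mul, map_sum, PowerSeries.coeff_mul]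
  rw [sum_antidiagonal_bideg i b (fun d d' => coeff d G * coeff d' H)]

lemma coeffXPow_zero_mul (G H : MvPowerSeries (Fin 2) S) :
    coeffXPow 0 (G * H) = coeffXPow 0 G * coeffXPow 0 H := by
  simp [coeffXPow_mul]

lemma coeffXPow_one_mul (G H : MvPowerSeries (Fin 2) S) :
    coeffXPow 1 (G * H) = coeffXPow 0 G * coeffXPow 1 H + coeffXPow 1 G * coeffXPow 0 H := by
  rw [coeffXPow_mul, Nat.antidiagonal_succ]
  simp

lemma coeffXPow_zero_one : coeffXPow 0 (1 : MvPowerSeries (Fin 2) S) = 1 := by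
  ext b; cases b <;> simp [coeff_one]

lemma coeffXPow_one_one : coeffXPow 1 (1 : MvPowerSeries (Fin 2) S) = 0 := by
  ext b; simp [coeff_one]

lemma coeffXPow_zero_pow (G : MvPowerSeries (Fin 2) S) (k : ℕ) :
    coeffXPow 0 (G ^ k) = coeffXPow 0 G ^ k := by
  induction k with
  | zero => exact coeffXPow_zero_one
  | succ k ih => rw [pow_succ, coeffXPow_zero_mul, ih, pow_succ]

lemma coeffXPow_one_pow (G : MvPowerSeries (Fin 2) S) (k : ℕ) :
    coeffXPow 1 (G ^ k) = k • (coeffXPow 0 G ^ (k - 1) * coeffXPow 1 G) := by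
  induction k with
  | zero => simpa using coeffXPow_one_one
  | succ k ih =>
    rw [pow_succ, coeffXPow_one_mul, ih, coeffXPow_zero_pow]
    rcases k with _ | k
    · simp
    · simp only [pow_succ, add_tsub_cancel_right, nsmul_eq_mul, Nat.cast_add, Nat.cast_one]
      ring

lemma coeff_bideg_one_pow {G : MvPowerSeries (Fin 2) S} (hG : coeffXPow 0 G = PowerSeries.X)
    {k b : ℕ} (hk : k ≤ b + 1) : coeff bideg(1, b) (G ^ k) = k * coeff bideg(1, b + 1 - k) G := by
  rcases Nat.eq_zero_or_pos k with rfl | hk0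
  · simp [coeff_one]
  rw [← coeff_coeffXPow, coeffXPow_one_pow, hG, map_nsmul, PowerSeries.coeff_X_pow_mul',
    if_pos (by omega), coeff_coeffXPow, nsmul_eq_mul, show b - (k - 1) = b + 1 - k by omega]

lemma coeff_nsmul_pow_char {σ : Type*} {p : ℕ} [ExpChar S p] (hp : p ≠ 0)
    (f : MvPowerSeries σ S) (d : σ →₀ ℕ) : coeff (p • d) (f ^ p) = coeff d f ^ p := by
  rw [← map_frobenius_expand p hp, coeff_map, coeff_expand_smul, frobenius_def]

end MvPowerSeries

namespace FGL

open MvPowerSeries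

variable {K : Type} [Field K] {V : DVF K} (Fg : FGL K V)

lemma coeffXPow_zero_F : coeffXPow 0 Fg.F = PowerSeries.X := by
  apply PowerSeries.eq_X_of_comp_self
  · simpa [coeffXPow] using Fg.const
  · simpa using Fg.linY
  · intro n
    simp only [← coeffXPow_zero_pow, coeff_coeffXPow]
    simpa using Fg.assoc 0 0 n

lemma coeff_bideg_one_zero : coeff bideg(1, 0) Fg.F = 1 := by
  simpa using Fg.linX

/-- Modulo `p`, `F^{kp} = (F^k)^p`, and `F^k ≡ Y^k + k X Y^{k-1}` modulo `X²`. -/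
lemma v_le_v_coeff_bideg_pow_sub {p : ℕ} (hp : p.Prime) (hvp : 0 < V.v (p : K)) {k : ℕ}
    (hk : 1 ≤ k) : V.v (p : K) ≤ V.v (coeff bideg(p, (k - 1) * p) (Fg.F ^ (k * p)) - k) := by
  have := Fact.mk hp
  set I := Ideal.span {(p : V.integers)}
  have : CharP (V.integers ⧸ I) p := CharP.quotient _ p (V.natCast_mem_nonunits hvp)
  have : ExpChar (V.integers ⧸ I) p := ExpChar.prime hp
  set F₀ := Fg.F.toSubring V.integers (fun d => V.mem_integers.mpr (Fg.int_coeff d)) with hF₀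
  have hslice₀ : coeffXPow 0 F₀ = PowerSeries.X := by
    ext b
    rw [coeff_coeffXPow, hF₀, coeff_toSubring, ← coeff_coeffXPow, Fg.coeffXPow_zero_F,
      PowerSeries.coeff_X, PowerSeries.coeff_X]
    split_ifs <;> rfl
  have hslice : coeffXPow 0 (map (Ideal.Quotient.mk I) F₀) = PowerSeries.X := by
    rw [coeffXPow_map, hslice₀, PowerSeries.map_X]
  have hbar : coeff bideg(p, (k - 1) * p) (map (Ideal.Quotient.mk I) F₀ ^ (k * p)) = k := by
    have hd : bideg(p, (k - 1) * p) = p • bideg(1, k - 1) := by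
      ext i; fin_cases i <;> simp [mul_comm]
    rw [hd, pow_mul, coeff_nsmul_pow_char hp.ne_zero, coeff_bideg_one_pow hslice (by omega),
      show k - 1 + 1 - k = 0 by omega, coeff_map]
    have h10 : coeff bideg(1, 0) F₀ = 1 := Subtype.ext Fg.coeff_bideg_one_zero
    rw [h10, map_one, mul_one, ← frobenius_def, map_natCast]
  have hF : Fg.F = map V.integers.subtype F₀ := (map_toSubring _ _ _).symm
  set c := coeff bideg(p, (k - 1) * p) (F₀ ^ (k * p))
  have hmem : c - k ∈ I := by
    rw [← Ideal.Quotient.eq_zero_iff_mem, map_sub, map_natCast, sub_eq_zero, ← hbar, ← map_pow,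
      coeff_map]
  obtain ⟨y, hy⟩ := Ideal.mem_span_singleton'.mp hmem
  have hcK : coeff bideg(p, (k - 1) * p) (Fg.F ^ (k * p)) - k = y * p := by
    rw [hF, ← map_pow, coeff_map, Subring.subtype_apply]
    have hyK := congrArg Subtype.val hy
    push_cast at hyK
    exact hyK.symm
  rw [hcK, V.v_mul]
  exact le_add_of_nonneg_left y.2

end FGL

namespace Isog

open PowerSeries

variable {K : Type} [Field K] {V : DVF K} {Fg Gg : FGL K V} (P : Isog V Fg Gg) {p : ℕ}

lemma v_coeff_pow_nonneg (k j : ℕ) : 0 ≤ V.v (coeff j (P.φ ^ k)) :=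
  V.v_coeff_pow_nonneg (fun d => by rw [Finsupp.unique_single d]; exact P.int_coeff _) k _

lemma coeff_mul_coeff_bideg_pow (i j : ℕ) :
    coeff (i + j) P.φ * MvPowerSeries.coeff bideg(i, j) (Fg.F ^ (i + j)) =
      ∑ k ∈ range (i + j + 1), ∑ l ∈ range (i + j + 1),
          MvPowerSeries.coeff bideg(k, l) Gg.F * coeff i (P.φ ^ k) * coeff j (P.φ ^ l) -
        ∑ k ∈ range (i + j), coeff k P.φ * MvPowerSeries.coeff bideg(i, j) (Fg.F ^ k) := by
  rw [← P.hom i j, sum_range_succ]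
  ring

lemma le_v_sum_hom (s t : Finset ℕ) (i j : ℕ) {μ : WithTop ℤ}
    (h : ∀ k, μ ≤ V.v (coeff i (P.φ ^ k))) :
    μ ≤ V.v (∑ k ∈ s, ∑ l ∈ t,
      MvPowerSeries.coeff bideg(k, l) Gg.F * coeff i (P.φ ^ k) * coeff j (P.φ ^ l)) := by
  refine V.toAddValuation.map_le_sum fun k _ => V.toAddValuation.map_le_sum fun l _ => ?_
  rw [V.toAddValuation_apply, V.v_mul, V.v_mul]
  exact le_add_of_le_of_nonneg (le_add_of_nonneg_of_le (Gg.int_coeff _) (h k))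
    (P.v_coeff_pow_nonneg l j)

lemma v_coeff_one_le_v_natCast_mul_coeff (n : ℕ) :
    V.v (coeff 1 P.φ) ≤ V.v (n * coeff n P.φ) := by
  induction n using Nat.strong_induction_on with
  | _ n ih =>
  obtain rfl | ⟨m, rfl⟩ : n = 0 ∨ ∃ m, n = m + 1 := by cases n <;> simp
  · simp [V.v_zero]
  have hcoeff_one_pow : ∀ k, V.v (coeff 1 P.φ) ≤ V.v (coeff 1 (P.φ ^ k)) := fun k => by
    rw [coeff_one_pow, V.v_mul, V.v_mul]
    exact le_add_of_le_of_nonneg (le_add_of_nonneg_left (V.v_natCast_nonneg k))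
      (by rw [← coeff_zero_eq_constantCoeff_apply]; exact V.integers.pow_mem (P.int_coeff 0) _)
  have key := P.coeff_mul_coeff_bideg_pow 1 m
  rw [MvPowerSeries.coeff_bideg_one_pow Fg.coeffXPow_zero_F (by omega),
    show m + 1 - (1 + m) = 0 by omega, Fg.coeff_bideg_one_zero, mul_one, mul_comm] at key
  rw [add_comm m 1, key]
  refine V.toAddValuation.map_le_sub (P.le_v_sum_hom _ _ 1 m hcoeff_one_pow)
    (V.toAddValuation.map_le_sum fun k hk => ?_)
  have hk := mem_range.mp hk
  rw [MvPowerSeries.coeff_bideg_one_pow Fg.coeffXPow_zero_F (by omega), ← mul_assoc,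
    mul_comm (coeff k P.φ), V.toAddValuation_apply, V.v_mul]
  exact le_add_of_le_of_nonneg (ih k (by omega)) (Fg.int_coeff _)

lemma v_le_v_coeff_of_not_dvd (hp : p.Prime) (hvp : 0 < V.v (p : K)) (hD : coeff 1 P.φ = p)
    {n : ℕ} (hn : ¬ p ∣ n) : V.v (p : K) ≤ V.v (coeff n P.φ) := by
  have h := P.v_coeff_one_le_v_natCast_mul_coeff n
  rwa [hD, V.v_mul, V.v_natCast_eq_zero hp hvp hn, zero_add] at h

lemma v_le_v_coeff_p_pow (hp : p.Prime) (hvp : 0 < V.v (p : K)) (hD : coeff 1 P.φ = p)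
    {s : ℕ} (hs : 2 ≤ s) : V.v (p : K) ≤ V.v (coeff p (P.φ ^ s)) := by
  obtain ⟨s, rfl⟩ : ∃ s', s = s' + 1 := ⟨s - 1, by omega⟩
  rw [pow_succ', coeff_mul]
  refine V.toAddValuation.map_le_sum fun ab hab => ?_
  obtain ⟨a, b⟩ := ab
  have hab : a + b = p := HasAntidiagonal.mem_antidiagonal.mp hab
  rw [V.toAddValuation_apply]
  rcases Nat.eq_zero_or_pos a with rfl | ha
  · simp [P.const, V.v_zero]
  rcases Nat.eq_zero_or_pos b with rfl | hb
  · simp [coeff_zero_eq_constantCoeff_apply, ← coeff_zero_eq_constantCoeff_apply P.φ, P.const,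
      V.v_zero, show s ≠ 0 by omega]
  rw [V.v_mul]
  exact le_add_of_le_of_nonneg
    (P.v_le_v_coeff_of_not_dvd hp hvp hD (Nat.not_dvd_of_pos_of_lt ha (by omega)))
    (P.v_coeff_pow_nonneg _ _)

lemma min_le_v_coeff_mul_p (hp : p.Prime) (hvp : 0 < V.v (p : K)) (hD : coeff 1 P.φ = p)
    {k : ℕ} (hk : 1 ≤ k) (hkp : k < p)
    (ih : ∀ m, 1 ≤ m → m < k * p → min (V.v (p : K)) (V.v (coeff p P.φ)) ≤ V.v (coeff m P.φ)) :
    min (V.v (p : K)) (V.v (coeff p P.φ)) ≤ V.v (coeff (k * p) P.φ) := by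
  set μ := min (V.v (p : K)) (V.v (coeff p P.φ))
  have hcoeff_p_pow : ∀ s, μ ≤ V.v (coeff p (P.φ ^ s)) := fun s => by
    match s with
    | 0 => simp [coeff_one, hp.ne_zero, V.v_zero]
    | 1 => rw [pow_one]; exact min_le_right _ _
    | s + 2 => exact (min_le_left _ _).trans (P.v_le_v_coeff_p_pow hp hvp hD (by omega))
  have key := P.coeff_mul_coeff_bideg_pow p ((k - 1) * p)
  rw [show p + (k - 1) * p = k * p by cases k <;> simp_all [add_mul, add_comm]] at key
  set A := MvPowerSeries.coeff bideg(p, (k - 1) * p) (Fg.F ^ (k * p))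
  have hmain : μ ≤ V.v (coeff (k * p) P.φ * A) := by
    rw [key]
    refine V.toAddValuation.map_le_sub (P.le_v_sum_hom _ _ _ _ hcoeff_p_pow)
      (V.toAddValuation.map_le_sum fun m hm => ?_)
    rw [V.toAddValuation_apply, V.v_mul]
    rcases Nat.eq_zero_or_pos m with rfl | hm0
    · simp [P.const, V.v_zero]
    exact le_add_of_le_of_nonneg (ih m hm0 (mem_range.mp hm))
      (V.v_coeff_pow_nonneg Fg.int_coeff _ _)
  have hsplit : coeff (k * p) P.φ * k = coeff (k * p) P.φ * A - coeff (k * p) P.φ * (A - k) := by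
    ring
  have h : μ ≤ V.v (coeff (k * p) P.φ * k) := by
    rw [hsplit]
    refine V.toAddValuation.map_le_sub hmain ?_
    rw [V.toAddValuation_apply, V.v_mul]
    exact le_add_of_nonneg_of_le (P.int_coeff _)
      ((min_le_left _ _).trans (Fg.v_le_v_coeff_bideg_pow_sub hp hvp hk))
  rwa [V.v_mul, V.v_natCast_eq_zero hp hvp (Nat.not_dvd_of_pos_of_lt hk hkp), add_zero] at h

lemma min_le_v_coeff (hp : p.Prime) (hvp : 0 < V.v (p : K)) (hD : coeff 1 P.φ = p) {m : ℕ}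
    (hm1 : 1 ≤ m) (hm : m < p ^ 2) :
    min (V.v (p : K)) (V.v (coeff p P.φ)) ≤ V.v (coeff m P.φ) := by
  induction m using Nat.strong_induction_on with
  | _ m ih =>
  by_cases hdvd : p ∣ m
  · obtain ⟨k, rfl⟩ := hdvd
    have hk : 1 ≤ k := Nat.pos_of_mul_pos_left hm1
    have hkp : k < p := by nlinarith
    rw [mul_comm]
    exact P.min_le_v_coeff_mul_p hp hvp hD hk hkp fun m hm1 hmk =>
      ih m (by linarith) hm1 (by nlinarith)
  · exact (min_le_left _ _).trans (P.v_le_v_coeff_of_not_dvd hp hvp hD hdvd)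

lemma sq_sub_mul_le_sq_sub_one_mul (hp : p.Prime) (hvp : 0 < V.v (p : K)) {e : ℕ}
    (he : V.v (p : K) = ((e : ℤ) : WithTop ℤ)) (hD : coeff 1 P.φ = p)
    (hss : (((p * e : ℕ) : ℤ) : WithTop ℤ) ≤ (p + 1) • V.v (coeff p P.φ))
    {j : ℕ} {u : ℤ} (hj1 : 1 ≤ j) (hj : j ≤ p ^ 2) (hu : V.v (coeff j P.φ) = u) :
    ((p : ℤ) ^ 2 - j) * e ≤ ((p : ℤ) ^ 2 - 1) * u := by
  have hp2 : (2 : ℤ) ≤ p := by exact_mod_cast hp.two_le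
  have hj1' : (1 : ℤ) ≤ j := by exact_mod_cast hj1
  have hu0 : 0 ≤ u := by exact_mod_cast hu ▸ P.int_coeff j
  have he0 : (0 : ℤ) ≤ e := by positivity
  rcases eq_or_lt_of_le hj with rfl | hjlt
  · push_cast; nlinarith
  have of_e_le : (e : ℤ) ≤ u → ((p : ℤ) ^ 2 - j) * e ≤ ((p : ℤ) ^ 2 - 1) * u := fun h => by
    nlinarith
  by_cases hdvd : p ∣ j
  · have hpj : (p : ℤ) ≤ j := by exact_mod_cast Nat.le_of_dvd hj1 hdvd
    have hmin := P.min_le_v_coeff hp hvp hD hj1 hjlt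
    rw [he, hu, min_le_iff, WithTop.coe_le_coe] at hmin
    refine hmin.elim of_e_le fun hcp => ?_
    obtain ⟨d, hd⟩ := WithTop.ne_top_iff_exists.mp (ne_top_of_le_ne_top WithTop.coe_ne_top hcp)
    rw [← hd, WithTop.coe_le_coe] at hcp
    rw [← hd, WithTop.nsmul_coe_int, WithTop.coe_le_coe] at hss
    push_cast at hss
    nlinarith
  · have heu := P.v_le_v_coeff_of_not_dvd hp hvp hD hdvd
    rw [he, hu, WithTop.coe_le_coe] at heu
    exact of_e_le heu

end Isog

lemma HasHeight.v_coeff_pow_eq_zero {K : Type} [Field K] {V : DVF K} {p n : ℕ}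
    {φ : PowerSeries K} (h : HasHeight V p n φ) (hp : p ≠ 0) :
    V.v (PowerSeries.coeff (p ^ n) φ) = 0 := by
  obtain ⟨ψ, -, hψ1, hψ⟩ := h
  have hlt := hψ (p ^ n)
  rw [if_pos dvd_rfl, Nat.div_self (pow_pos (Nat.pos_of_ne_zero hp) n), ← hψ1] at hlt
  rw [← add_sub_cancel (PowerSeries.coeff 1 ψ) (PowerSeries.coeff (p ^ n) φ), ← hψ1]
  exact V.toAddValuation.map_add_eq_of_lt_left hlt

theorem stmt16_general (p : ℕ) (hp : p.Prime) (K : Type) [Field K]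
    (V : DVF K) (hres : 0 < V.v (p : K))
    (e : ℕ) (hvp : V.v (p : K) = ((e : ℤ) : WithTop ℤ))
    (Eg : FGL K V) (P : Isog V Eg Eg)
    (hD : PowerSeries.coeff (R := K) 1 P.φ = (p : K))
    (hht : HasHeight V p 2 P.φ)
    -- supersingular case hypothesis: v(a(Ê)) ≥ pe/(p+1)
    (hss : (((p * e : ℕ) : ℤ) : WithTop ℤ) ≤ (p + 1) • V.v (PowerSeries.coeff (R := K) p P.φ))
    -- a valued extension L/K (inside K̄) of ramification index r containing the point
    (L : Type) [Field L] (W : DVF L) (ι : K →+* L)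
    (r : ℕ) (hext : ∀ x : K, W.v (ι x) = r • V.v x)
    (x : L) (hx0 : x ≠ 0) (hxm : 0 < W.v x) (hker : PSEvalExt W ι P.φ x 0) :
    (p ^ 2 - 1) • W.v x = (((r * e : ℕ) : ℤ) : WithTop ℤ) := by
  have hN : 2 ≤ p ^ 2 := by nlinarith [hp.two_le]
  refine W.nsmul_v_eq_of_tendsto_zero hN (a := fun j => ι (PowerSeries.coeff j P.φ))
    ?_ ?_ ?_ ?_ ?_ hx0 hxm hker
  · simp [P.const]
  · rw [hext, hD, hvp, WithTop.nsmul_coe_int]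
    push_cast; rfl
  · rw [hext, hht.v_coeff_pow_eq_zero hp.ne_zero, nsmul_zero]
  · exact fun j => by rw [hext]; exact nsmul_nonneg (P.int_coeff j) r
  · intro j u hj1 hj hu
    have hc : PowerSeries.coeff j P.φ ≠ 0 := fun h => by
      simp [h, W.v_zero] at hu
    obtain ⟨u', hu'⟩ := WithTop.ne_top_iff_exists.mp (mt (V.v_top_iff _).1 hc)
    rw [hext, ← hu', WithTop.nsmul_coe_int, WithTop.coe_inj] at hu
    subst hu
    have h := P.sq_sub_mul_le_sq_sub_one_mul hp hres hvp hD hss hj1 hj hu'.symm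
    push_cast
    nlinarith [mul_le_mul_of_nonneg_left h (Nat.cast_nonneg r : (0 : ℤ) ≤ r)]

/-- Theorem 3.5 (ii), Katz–Lubin. Let `E` be an elliptic curve over a
complete discretely valued field `K` of characteristic 0 with supersingular reduction
(so its formal group `Ê` has height 2), `e = v_K(p)`, and let `a(Ê)` be the coefficient
of `T^p` in the multiplication-by-`p` series `[p](T)` of `Ê` (the isogeny `P : Ê → Ê`
with `D(P) = p`).  If `v_K(a(Ê)) ≥ pe/(p+1)`, then every nonzero `p`-torsion point
`x ∈ Ê[p]` (lying in a valued extension `L` of `K` with ramification index `r`, so that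
`v_K = (1/r)·v_L` on `K`) satisfies `v_K(x) = e/(p²-1)`. -/
theorem stmt16 (p : ℕ) (hp : p.Prime) (K : Type) [Field K] [CharZero K]
    (V : DVF K) (hcomp : V.IsComplete) (hres : 0 < V.v (p : K))
    (e : ℕ) (he : 0 < e) (hvp : V.v (p : K) = ((e : ℤ) : WithTop ℤ))
    (Eg : FGL K V) (P : Isog V Eg Eg)
    (hD : PowerSeries.coeff (R := K) 1 P.φ = (p : K))
    (hht : HasHeight V p 2 P.φ)
    -- supersingular case hypothesis: v(a(Ê)) ≥ pe/(p+1)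
    (hss : (((p * e : ℕ) : ℤ) : WithTop ℤ) ≤ (p + 1) • V.v (PowerSeries.coeff (R := K) p P.φ))
    -- a valued extension L/K (inside K̄) of ramification index r containing the point
    (L : Type) [Field L] (W : DVF L) (ι : K →+* L)
    (r : ℕ) (hr : 0 < r) (hext : ∀ x : K, W.v (ι x) = r • V.v x)
    (x : L) (hx0 : x ≠ 0) (hxm : 0 < W.v x) (hker : PSEvalExt W ι P.φ x 0) :
    (p ^ 2 - 1) • W.v x = (((r * e : ℕ) : ℤ) : WithTop ℤ) :=
  stmt16_general p hp K V hres e hvp Eg P hD hht hss L W ι r hext x hx0 hxm hker
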